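/- arXiv:2503.08503 — 3 statements merged into one kernel-verified Lean document; each statement's English description precedes it below -/
import Mathlib

section
/- For all x₀, y₀ ∈ ℝ and all x > x₀: G(x, U_A(U_A⁻¹(y₀) + (x − x₀))) ≤ G(x₀, y₀) < G(x, y₀). (The two inequalities used in the paper's proof of existence of the terminal value v*(x,T): monotonicity of G in x gives the right inequality, and the decrease of U_A' gives the left inequality.) -/
/-- The terminal value `G(x,y) = L(x,y,T)` of `L = w + c ∂_y w` in the principal–agent
problem: `G(x,y) = U_P(x − U_A⁻¹(y)) − c·U_P'(x − U_A⁻¹(y)) / U_A'(U_A⁻¹(y))`. -/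
noncomputable def G (UA UP : ℝ → ℝ) (c : ℝ) (x y : ℝ) : ℝ :=
  UP (x - Function.invFun UA y)
    - c * deriv UP (x - Function.invFun UA y) / deriv UA (Function.invFun UA y)

/-!
With `a = U_A⁻¹(y)`, `G(x,y) = U_P(x − a) − c·U_P'(x − a)/U_A'(a)`. For fixed `y`, raising `x`
raises `U_P(x − a)` strictly and lowers the penalty `U_P'(x − a)` by concavity of `U_P`.
Replacing `(x₀, y₀)` by `(x, U_A(a + (x − x₀)))` shifts `x` and `a` by the same amount, so
`x − a` is unchanged and only `U_A'(a)` moves, downwards by concavity of `U_A`; the penalty grows.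
-/

open Function

theorem antitone_deriv_of_contDiff_two {f : ℝ → ℝ} (hf : ContDiff ℝ 2 f)
    (hf'' : ∀ z, deriv (deriv f) z ≤ 0) : Antitone (deriv f) :=
  antitone_of_deriv_nonpos hf.differentiable_deriv_two hf''

section TerminalValue

variable {UA UP : ℝ → ℝ} {c : ℝ}

theorem G_eq_of_invFun_eq {x y a : ℝ} (h : invFun UA y = a) :
    G UA UP c x y = UP (x - a) - c * deriv UP (x - a) / deriv UA a := by
  rw [G, h]

theorem G_shift_le (hinj : Injective UA) (hA : Antitone (deriv UA))
    (hA' : ∀ z, 0 < deriv UA z) (hc : 0 ≤ c) (hP' : ∀ z, 0 ≤ deriv UP z)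
    (y : ℝ) {x₀ x : ℝ} (hx : x₀ ≤ x) :
    G UA UP c x (UA (invFun UA y + (x - x₀))) ≤ G UA UP c x₀ y := by
  set a := invFun UA y
  rw [G_eq_of_invFun_eq (leftInverse_invFun hinj _), G_eq_of_invFun_eq rfl,
    show x - (a + (x - x₀)) = x₀ - a by ring]
  have hP'a := hP' (x₀ - a)
  have hA'a := hA' (a + (x - x₀))
  gcongr
  exact hA (by linarith)

theorem G_strictMono_left (hP : StrictMono UP) (hP' : Antitone (deriv UP)) (hc : 0 ≤ c)
    {y : ℝ} (hA : 0 < deriv UA (invFun UA y)) : StrictMono (fun x ↦ G UA UP c x y) := by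
  intro x₀ x hx
  simp only [G]
  have hUP := hP (sub_lt_sub_right hx (invFun UA y))
  have hUP' := hP' (sub_le_sub_right hx.le (invFun UA y))
  exact (sub_lt_sub_right hUP _).trans_le (sub_le_sub_left (by gcongr) _)

end TerminalValue

/-- For all `x₀, y₀` and all `x > x₀`:
`G(x, U_A(U_A⁻¹(y₀) + (x − x₀))) ≤ G(x₀, y₀) < G(x, y₀)`. -/
theorem stmt_4
    (UA UP : ℝ → ℝ) (c : ℝ) (hc : 0 < c)
    (hUA : ContDiff ℝ 2 UA) (hUP : ContDiff ℝ 2 UP)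
    (hUA' : ∀ z, 0 < deriv UA z) (hUA'' : ∀ z, deriv (deriv UA) z ≤ 0)
    (hUP' : ∀ z, 0 < deriv UP z) (hUP'' : ∀ z, deriv (deriv UP) z ≤ 0)
    (hbij : Function.Bijective UA) :
    ∀ x₀ y₀ x : ℝ, x₀ < x →
      G UA UP c x (UA (Function.invFun UA y₀ + (x - x₀))) ≤ G UA UP c x₀ y₀
      ∧ G UA UP c x₀ y₀ < G UA UP c x y₀ := by
  intro x₀ y₀ x hx
  exact ⟨G_shift_le hbij.injective (antitone_deriv_of_contDiff_two hUA hUA'') hUA' hc.le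
      (fun z ↦ (hUP' z).le) y₀ hx.le,
    G_strictMono_left (strictMono_of_deriv_pos hUP') (antitone_deriv_of_contDiff_two hUP hUP'')
      hc.le (hUA' _) hx⟩
end

section
/- Fix l ∈ ℝ and suppose Y : ℝ → ℝ satisfies G(x, Y(x)) = l for all x ∈ ℝ, and set C(x) := U_A⁻¹(Y(x)). Then for all x' < x one has 0 < C(x) − C(x') ≤ x − x'. In particular C is strictly increasing, 1-Lipschitz, and satisfies a linear growth bound |C(x)| ≤ c₁(1 + |x|) for some constant c₁ > 0. (The continuity and linear growth of the optimal contract C*(·;l), i.e. that C*(·;l) belongs to the admissible class 𝒞.) -/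
theorem antitone_deriv_of_deriv_deriv_nonpos {f : ℝ → ℝ} (hf : ContDiff ℝ 2 f)
    (hf'' : ∀ x, deriv (deriv f) x ≤ 0) : Antitone (deriv f) :=
  antitone_of_deriv_nonpos ((hf.deriv' (n := 1)).differentiable one_ne_zero) hf''

theorem strictMono_sub_mul_div {f g : ℝ → ℝ} {c a : ℝ} (hf : StrictMono f) (hg : Antitone g)
    (hc : 0 ≤ c) (ha : 0 ≤ a) : StrictMono fun u => f u - c * g u / a := by
  intro u₁ u₂ hu
  have : c * g u₂ / a ≤ c * g u₁ / a := by gcongr; exact hg hu.le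
  linarith [hf hu]

theorem antitone_sub_div {g : ℝ → ℝ} {b p : ℝ} (hp : 0 ≤ p) (hg : Antitone g)
    (hg_pos : ∀ v, 0 < g v) : Antitone fun v => b - p / g v := by
  intro v₁ v₂ hv
  have : p / g v₁ ≤ p / g v₂ := div_le_div_of_nonneg_left hp (hg_pos v₂) (hg hv)
  linarith

theorem sub_mem_Ioc_of_level_curve {H : ℝ → ℝ → ℝ} (hH_fst : ∀ v, StrictMono (H · v))
    (hH_snd : ∀ u, Antitone (H u)) {C : ℝ → ℝ} {l : ℝ} (hC : ∀ x, H (x - C x) (C x) = l)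
    {x' x : ℝ} (hx : x' < x) : C x - C x' ∈ Set.Ioc 0 (x - x') := by
  constructor
  · by_contra! hle
    have := calc
      l = H (x' - C x') (C x') := (hC x').symm
      _ ≤ H (x' - C x') (C x) := hH_snd _ (by linarith)
      _ < H (x - C x) (C x) := hH_fst _ (by linarith)
    exact this.ne (hC x).symm
  · by_contra! hgt
    have := calc
      l = H (x - C x) (C x) := (hC x).symm
      _ ≤ H (x - C x) (C x') := hH_snd _ (by linarith)
      _ < H (x' - C x') (C x') := hH_fst _ (by linarith)
    exact this.ne (hC x').symm

theorem lipschitzWith_one_of_monotone_of_sub_le {f : ℝ → ℝ} (hf : Monotone f)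
    (h : ∀ x' x, x' < x → f x - f x' ≤ x - x') : LipschitzWith 1 f := by
  refine LipschitzWith.of_le_add fun x y => ?_
  rw [Real.dist_eq]
  rcases lt_or_ge y x with hyx | hxy
  · linarith [h y x hyx, le_abs_self (x - y)]
  · linarith [hf hxy, abs_nonneg (x - y)]

theorem LipschitzWith.exists_norm_le_mul_one_add_norm {E F : Type*} [SeminormedAddCommGroup E]
    [SeminormedAddCommGroup F] {K : NNReal} {f : E → F} (hf : LipschitzWith K f) :
    ∃ c₁ : ℝ, 0 < c₁ ∧ ∀ x, ‖f x‖ ≤ c₁ * (1 + ‖x‖) := by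
  refine ⟨‖f 0‖ + K + 1, by positivity, fun x => ?_⟩
  have hdist : ‖f x - f 0‖ ≤ K * ‖x‖ := by simpa [dist_eq_norm] using hf.dist_le_mul x 0
  have hK : (0 : ℝ) ≤ K := K.2
  calc ‖f x‖ ≤ ‖f 0‖ + K * ‖x‖ := by linarith [norm_le_norm_add_norm_sub' (f x) (f 0)]
    _ ≤ (‖f 0‖ + K + 1) * (1 + ‖x‖) := by nlinarith [norm_nonneg x, norm_nonneg (f 0)]

theorem stmt_6_general
    (UA UP : ℝ → ℝ) (c : ℝ) (hc : 0 < c)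
    (hUA : ContDiff ℝ 2 UA) (hUP : ContDiff ℝ 2 UP)
    (hUA' : ∀ z, 0 < deriv UA z) (hUA'' : ∀ z, deriv (deriv UA) z ≤ 0)
    (hUP' : ∀ z, 0 < deriv UP z) (hUP'' : ∀ z, deriv (deriv UP) z ≤ 0)
    (l : ℝ) (Y : ℝ → ℝ) (hY : ∀ x, G UA UP c x (Y x) = l)
    (C : ℝ → ℝ) (hC : ∀ x, C x = Function.invFun UA (Y x)) :
    (∀ x' x : ℝ, x' < x → 0 < C x - C x' ∧ C x - C x' ≤ x - x')
    ∧ StrictMono C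
    ∧ LipschitzWith 1 C
    ∧ ∃ c₁ : ℝ, 0 < c₁ ∧ ∀ x : ℝ, |C x| ≤ c₁ * (1 + |x|) := by
  let H : ℝ → ℝ → ℝ := fun u v => UP u - c * deriv UP u / deriv UA v
  have hH_fst : ∀ v, StrictMono (H · v) := fun v =>
    strictMono_sub_mul_div (strictMono_of_deriv_pos hUP')
      (antitone_deriv_of_deriv_deriv_nonpos hUP hUP'') hc.le (hUA' v).le
  have hH_snd : ∀ u, Antitone (H u) := fun u =>
    antitone_sub_div (mul_pos hc (hUP' u)).le (antitone_deriv_of_deriv_deriv_nonpos hUA hUA'') hUA'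
  have hlevel : ∀ x, H (x - C x) (C x) = l := fun x => by simpa only [G, ← hC] using hY x
  have hinc : ∀ x' x : ℝ, x' < x → 0 < C x - C x' ∧ C x - C x' ≤ x - x' :=
    fun _ _ hx => sub_mem_Ioc_of_level_curve hH_fst hH_snd hlevel hx
  have hmono : StrictMono C := fun x' x hx => sub_pos.mp (hinc x' x hx).1
  have hlip : LipschitzWith 1 C :=
    lipschitzWith_one_of_monotone_of_sub_le hmono.monotone fun x' x hx => (hinc x' x hx).2
  obtain ⟨c₁, hc₁, hgrowth⟩ := hlip.exists_norm_le_mul_one_add_norm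
  exact ⟨hinc, hmono, hlip, c₁, hc₁, by simpa only [Real.norm_eq_abs] using hgrowth⟩

/-- If `G(x, Y(x)) = l` for all `x` and `C(x) := U_A⁻¹(Y(x))`, then for all `x' < x`,
`0 < C(x) − C(x') ≤ x − x'`; in particular `C` is strictly increasing, 1-Lipschitz and
of linear growth `|C(x)| ≤ c₁(1 + |x|)` (the contract `C*(·;l)` belongs to `𝒞`). -/
theorem stmt_6
    (UA UP : ℝ → ℝ) (c : ℝ) (hc : 0 < c)
    (hUA : ContDiff ℝ 2 UA) (hUP : ContDiff ℝ 2 UP)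
    (hUA' : ∀ z, 0 < deriv UA z) (hUA'' : ∀ z, deriv (deriv UA) z ≤ 0)
    (hUP' : ∀ z, 0 < deriv UP z) (hUP'' : ∀ z, deriv (deriv UP) z ≤ 0)
    (hbij : Function.Bijective UA)
    (l : ℝ) (Y : ℝ → ℝ) (hY : ∀ x, G UA UP c x (Y x) = l)
    (C : ℝ → ℝ) (hC : ∀ x, C x = Function.invFun UA (Y x)) :
    (∀ x' x : ℝ, x' < x → 0 < C x - C x' ∧ C x - C x' ≤ x - x')
    ∧ StrictMono C
    ∧ LipschitzWith 1 C
    ∧ ∃ c₁ : ℝ, 0 < c₁ ∧ ∀ x : ℝ, |C x| ≤ c₁ * (1 + |x|) :=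
  stmt_6_general UA UP c hc hUA hUP hUA' hUA'' hUP' hUP'' l Y hY C hC
end

section
/- Let σ : ℝ → ℝ and c > 0. Let w : ℝ³ → ℝ (arguments (x, y, t)) be three times continuously differentiable, define L := w + c·∂_y w, and suppose L_y(x,y,t) ≠ 0 for all (x,y,t) and that w satisfies w_t + (σ(x)²/2)·w_{xx} = (σ(x)²/(2c))·L_x²/L_y at every point. Then L satisfies L_t + (σ(x)²/2)·L_{xx} = (σ(x)²/(2c))·L_x²/L_y + σ(x)²·L_x·L_{xy}/L_y − (σ(x)²/2)·L_x²·L_{yy}/L_y² at every point. (Obtained in the paper by differentiating the equation for w with respect to y and adding; equation (equ_L).) -/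
/-- First partial derivative in the 1st argument of a function of three real variables. -/
noncomputable def p1 (f : ℝ → ℝ → ℝ → ℝ) (x y t : ℝ) : ℝ := deriv (fun a => f a y t) x
/-- First partial derivative in the 2nd argument. -/
noncomputable def p2 (f : ℝ → ℝ → ℝ → ℝ) (x y t : ℝ) : ℝ := deriv (fun b => f x b t) y
/-- First partial derivative in the 3rd argument. -/
noncomputable def p3 (f : ℝ → ℝ → ℝ → ℝ) (x y t : ℝ) : ℝ := deriv (fun s => f x y s) t
/-- Second partial derivative in the 1st argument. -/
noncomputable def p11 (f : ℝ → ℝ → ℝ → ℝ) : ℝ → ℝ → ℝ → ℝ := p1 (p1 f)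
/-- Mixed second partial derivative (first in the 1st, then in the 2nd argument). -/
noncomputable def p12 (f : ℝ → ℝ → ℝ → ℝ) : ℝ → ℝ → ℝ → ℝ := p2 (p1 f)
/-- Second partial derivative in the 2nd argument. -/
noncomputable def p22 (f : ℝ → ℝ → ℝ → ℝ) : ℝ → ℝ → ℝ → ℝ := p2 (p2 f)

/-! Since `L = w + c w_y` and partial derivatives of a `C³` function commute,
`L_t + (σ²/2) L_xx = (w_t + (σ²/2) w_xx) + c ∂_y (w_t + (σ²/2) w_xx)`.
Substituting the equation for `w` and differentiating its right-hand side in `y` gives the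
claim, the factor `c` cancelling against the `1/c` of that right-hand side. -/

theorem fderiv_fderiv_apply_comm {E F : Type*} [NormedAddCommGroup E] [NormedSpace ℝ E]
    [NormedAddCommGroup F] [NormedSpace ℝ F] {f : E → F} (hf : ContDiff ℝ 2 f) (u v q : E) :
    fderiv ℝ (fun r => fderiv ℝ f r u) q v = fderiv ℝ (fun r => fderiv ℝ f r v) q u := by
  have hdf : Differentiable ℝ (fderiv ℝ f) :=
    (hf.fderiv_right le_rfl).differentiable one_ne_zero
  rw [fderiv_clm_apply (hdf q) (differentiableAt_const u),
    fderiv_clm_apply (hdf q) (differentiableAt_const v)]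
  simpa using (hf.contDiffAt.isSymmSndFDerivAt (by simp)) v u

def uncurry3 (f : ℝ → ℝ → ℝ → ℝ) (q : ℝ × ℝ × ℝ) : ℝ := f q.1 q.2.1 q.2.2

noncomputable def kolmogorovOp (σ : ℝ → ℝ) (f : ℝ → ℝ → ℝ → ℝ) (x y t : ℝ) : ℝ :=
  p3 f x y t + σ x ^ 2 / 2 * p11 f x y t

section Partials

variable {f g : ℝ → ℝ → ℝ → ℝ} {x y t : ℝ}

theorem hasDerivAt_uncurry3_slice1 (hf : DifferentiableAt ℝ (uncurry3 f) (x, y, t)) :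
    HasDerivAt (fun a => f a y t) (fderiv ℝ (uncurry3 f) (x, y, t) (1, 0, 0)) x :=
  (hf.hasFDerivAt.comp_hasDerivAt x ((hasDerivAt_id x).prodMk (hasDerivAt_const x (y, t))) :)

theorem hasDerivAt_uncurry3_slice2 (hf : DifferentiableAt ℝ (uncurry3 f) (x, y, t)) :
    HasDerivAt (fun b => f x b t) (fderiv ℝ (uncurry3 f) (x, y, t) (0, 1, 0)) y :=
  (hf.hasFDerivAt.comp_hasDerivAt y
    ((hasDerivAt_const y x).prodMk ((hasDerivAt_id y).prodMk (hasDerivAt_const y t))) :)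

theorem hasDerivAt_uncurry3_slice3 (hf : DifferentiableAt ℝ (uncurry3 f) (x, y, t)) :
    HasDerivAt (fun s => f x y s) (fderiv ℝ (uncurry3 f) (x, y, t) (0, 0, 1)) t :=
  (hf.hasFDerivAt.comp_hasDerivAt t
    ((hasDerivAt_const t x).prodMk ((hasDerivAt_const t y).prodMk (hasDerivAt_id t))) :)

theorem uncurry3_p1 (hf : Differentiable ℝ (uncurry3 f)) :
    uncurry3 (p1 f) = fun q => fderiv ℝ (uncurry3 f) q (1, 0, 0) :=
  funext fun _ => (hasDerivAt_uncurry3_slice1 (hf _)).deriv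

theorem uncurry3_p2 (hf : Differentiable ℝ (uncurry3 f)) :
    uncurry3 (p2 f) = fun q => fderiv ℝ (uncurry3 f) q (0, 1, 0) :=
  funext fun _ => (hasDerivAt_uncurry3_slice2 (hf _)).deriv

theorem uncurry3_p3 (hf : Differentiable ℝ (uncurry3 f)) :
    uncurry3 (p3 f) = fun q => fderiv ℝ (uncurry3 f) q (0, 0, 1) :=
  funext fun _ => (hasDerivAt_uncurry3_slice3 (hf _)).deriv

theorem hasDerivAt_p2 (hf : DifferentiableAt ℝ (uncurry3 f) (x, y, t)) :
    HasDerivAt (fun b => f x b t) (p2 f x y t) y :=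
  (hasDerivAt_uncurry3_slice2 hf).differentiableAt.hasDerivAt

theorem p1_add_const_mul (hf : Differentiable ℝ (uncurry3 f))
    (hg : Differentiable ℝ (uncurry3 g)) (c : ℝ) :
    p1 (fun a b s => f a b s + c * g a b s) = fun a b s => p1 f a b s + c * p1 g a b s := by
  funext x y t
  exact ((hasDerivAt_uncurry3_slice1 (hf _)).differentiableAt.hasDerivAt.add
    ((hasDerivAt_uncurry3_slice1 (hg _)).differentiableAt.hasDerivAt.const_mul c)).deriv

theorem p3_add_const_mul (hf : Differentiable ℝ (uncurry3 f))
    (hg : Differentiable ℝ (uncurry3 g)) (c : ℝ) :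
    p3 (fun a b s => f a b s + c * g a b s) = fun a b s => p3 f a b s + c * p3 g a b s := by
  funext x y t
  exact ((hasDerivAt_uncurry3_slice3 (hf _)).differentiableAt.hasDerivAt.add
    ((hasDerivAt_uncurry3_slice3 (hg _)).differentiableAt.hasDerivAt.const_mul c)).deriv

variable {m n : WithTop ℕ∞}

theorem ContDiff.uncurry3_p1 (hf : ContDiff ℝ n (uncurry3 f)) (hmn : m + 1 ≤ n) :
    ContDiff ℝ m (uncurry3 (p1 f)) := by
  rw [_root_.uncurry3_p1 ((hf.of_le (le_add_self.trans hmn)).differentiable one_ne_zero)]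
  exact (hf.fderiv_right hmn).clm_apply contDiff_const

theorem ContDiff.uncurry3_p2 (hf : ContDiff ℝ n (uncurry3 f)) (hmn : m + 1 ≤ n) :
    ContDiff ℝ m (uncurry3 (p2 f)) := by
  rw [_root_.uncurry3_p2 ((hf.of_le (le_add_self.trans hmn)).differentiable one_ne_zero)]
  exact (hf.fderiv_right hmn).clm_apply contDiff_const

theorem ContDiff.uncurry3_p3 (hf : ContDiff ℝ n (uncurry3 f)) (hmn : m + 1 ≤ n) :
    ContDiff ℝ m (uncurry3 (p3 f)) := by
  rw [_root_.uncurry3_p3 ((hf.of_le (le_add_self.trans hmn)).differentiable one_ne_zero)]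
  exact (hf.fderiv_right hmn).clm_apply contDiff_const

theorem p1_p2_comm (hf : ContDiff ℝ 2 (uncurry3 f)) : p1 (p2 f) = p2 (p1 f) := by
  have hdf : Differentiable ℝ (uncurry3 f) := hf.differentiable two_ne_zero
  have h : uncurry3 (p1 (p2 f)) = uncurry3 (p2 (p1 f)) := by
    rw [uncurry3_p1 ((hf.uncurry3_p2 (m := 1) le_rfl).differentiable one_ne_zero),
      uncurry3_p2 ((hf.uncurry3_p1 (m := 1) le_rfl).differentiable one_ne_zero),
      uncurry3_p1 hdf, uncurry3_p2 hdf]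
    exact funext (fderiv_fderiv_apply_comm hf _ _)
  funext x y t
  exact congrFun h (x, y, t)

theorem p3_p2_comm (hf : ContDiff ℝ 2 (uncurry3 f)) : p3 (p2 f) = p2 (p3 f) := by
  have hdf : Differentiable ℝ (uncurry3 f) := hf.differentiable two_ne_zero
  have h : uncurry3 (p3 (p2 f)) = uncurry3 (p2 (p3 f)) := by
    rw [uncurry3_p3 ((hf.uncurry3_p2 (m := 1) le_rfl).differentiable one_ne_zero),
      uncurry3_p2 ((hf.uncurry3_p3 (m := 1) le_rfl).differentiable one_ne_zero),
      uncurry3_p3 hdf, uncurry3_p2 hdf]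
    exact funext (fderiv_fderiv_apply_comm hf _ _)
  funext x y t
  exact congrFun h (x, y, t)

end Partials

theorem kolmogorovOp_add_const_mul_p2 (σ : ℝ → ℝ) (c : ℝ) {f : ℝ → ℝ → ℝ → ℝ}
    (hf : ContDiff ℝ 3 (uncurry3 f)) (x y t : ℝ) :
    kolmogorovOp σ (fun a b s => f a b s + c * p2 f a b s) x y t
      = kolmogorovOp σ f x y t + c * p2 (kolmogorovOp σ f) x y t := by
  have hf2 : ContDiff ℝ 2 (uncurry3 f) := hf.of_le (by norm_num)
  have hp1 : ContDiff ℝ 2 (uncurry3 (p1 f)) := hf.uncurry3_p1 (by norm_num)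
  have hp2 : ContDiff ℝ 2 (uncurry3 (p2 f)) := hf.uncurry3_p2 (by norm_num)
  have hp12 : ContDiff ℝ 1 (uncurry3 (p1 (p2 f))) := hp2.uncurry3_p1 (by norm_num)
  have hp3 : ContDiff ℝ 2 (uncurry3 (p3 f)) := hf.uncurry3_p3 (by norm_num)
  have hp11 : ContDiff ℝ 1 (uncurry3 (p11 f)) := hp1.uncurry3_p1 (by norm_num)
  have hp2_op : p2 (kolmogorovOp σ f) x y t
      = p2 (p3 f) x y t + σ x ^ 2 / 2 * p2 (p11 f) x y t :=
    ((hasDerivAt_p2 (hp3.differentiable two_ne_zero _)).add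
      ((hasDerivAt_p2 (hp11.differentiable one_ne_zero _)).const_mul _)).deriv
  have hp11_sum : p11 (fun a b s => f a b s + c * p2 f a b s)
      = fun a b s => p11 f a b s + c * p2 (p11 f) a b s := by
    rw [p11, p1_add_const_mul (hf2.differentiable two_ne_zero) (hp2.differentiable two_ne_zero),
      p1_add_const_mul (hp1.differentiable two_ne_zero) (hp12.differentiable one_ne_zero),
      p1_p2_comm hf2, p1_p2_comm hp1, p11]
  rw [kolmogorovOp, kolmogorovOp, hp2_op, hp11_sum,
    p3_add_const_mul (hf2.differentiable two_ne_zero) (hp2.differentiable two_ne_zero),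
    p3_p2_comm hf2]
  ring

/-- Equation (equ_L) of the paper: if `w(x,y,t)` is `C³`, `L := w + c·∂_y w` has
`L_y ≠ 0` everywhere, and `w_t + (σ²/2)w_{xx} = (σ²/(2c))L_x²/L_y` everywhere, then
`L_t + (σ²/2)L_{xx} = (σ²/(2c))L_x²/L_y + σ²L_xL_{xy}/L_y − (σ²/2)L_x²L_{yy}/L_y²`
everywhere. -/
theorem stmt_14
    (σ : ℝ → ℝ) (c : ℝ) (hc : 0 < c)
    (w : ℝ → ℝ → ℝ → ℝ)
    (hw : ContDiff ℝ 3 (fun p : ℝ × ℝ × ℝ => w p.1 p.2.1 p.2.2))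
    (L : ℝ → ℝ → ℝ → ℝ)
    (hLdef : ∀ x y t : ℝ, L x y t = w x y t + c * p2 w x y t)
    (hLy : ∀ x y t : ℝ, p2 L x y t ≠ 0)
    (hPDEw : ∀ x y t : ℝ,
      p3 w x y t + σ x ^ 2 / 2 * p11 w x y t
        = σ x ^ 2 / (2 * c) * (p1 L x y t) ^ 2 / p2 L x y t) :
    ∀ x y t : ℝ,
      p3 L x y t + σ x ^ 2 / 2 * p11 L x y t
        = σ x ^ 2 / (2 * c) * (p1 L x y t) ^ 2 / p2 L x y t
          + σ x ^ 2 * p1 L x y t * p12 L x y t / p2 L x y t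
          - σ x ^ 2 / 2 * (p1 L x y t) ^ 2 * p22 L x y t / (p2 L x y t) ^ 2 := by
  intro x y t
  have hL : L = fun a b s => w a b s + c * p2 w a b s := funext₃ hLdef
  have hL2 : ContDiff ℝ 2 (uncurry3 L) :=
    hL ▸ (hw.of_le (by norm_num)).add
      (contDiff_const.mul (ContDiff.uncurry3_p2 hw (by norm_num)))
  have hPDE : kolmogorovOp σ w = fun a b s => σ a ^ 2 / (2 * c) * p1 L a b s ^ 2 / p2 L a b s :=
    funext₃ hPDEw
  have hp1L : HasDerivAt (fun b => p1 L x b t) (p12 L x y t) y :=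
    hasDerivAt_p2 ((hL2.uncurry3_p1 (m := 1) le_rfl).differentiable one_ne_zero _)
  have hp2L : HasDerivAt (fun b => p2 L x b t) (p22 L x y t) y :=
    hasDerivAt_p2 ((hL2.uncurry3_p2 (m := 1) le_rfl).differentiable one_ne_zero _)
  have hp2_rhs : p2 (kolmogorovOp σ w) x y t
      = σ x ^ 2 / (2 * c) * (2 * p1 L x y t * p12 L x y t * p2 L x y t
        - p1 L x y t ^ 2 * p22 L x y t) / p2 L x y t ^ 2 := by
    rw [hPDE]
    refine (((hp1L.pow 2).const_mul _).div hp2L (hLy x y t)).deriv.trans ?_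
    push_cast [Pi.pow_apply]
    ring
  have hL_op := kolmogorovOp_add_const_mul_p2 σ c hw x y t
  rw [← hL, kolmogorovOp, kolmogorovOp] at hL_op
  rw [hL_op, hPDEw, hp2_rhs]
  field_simp
  ring
end
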